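/- Any integral moving-phantom mechanism induced by a single-minded proportional and upper-quota capped phantom system together with floor rounding satisfies single-minded quota-proportionality: on any single-minded integral profile, the output gives each alternative j an amount in {⌊b·n_j/n⌋, ⌈b·n_j/n⌉} where n_j is the number of voters voting b on alternative j. -/

import Mathlib

/-- The median of `2n+1` naturals: the `(n+1)`-st smallest. -/
def medianN (n : ℕ) (v : Fin (2*n+1) → ℕ) : ℕ :=
  (Multiset.sort (Multiset.map v Finset.univ.val) (· ≤ ·)).getD n 0

/-- Merge `n` votes and `n+1` phantoms into one vector of `2n+1` values. -/
def mergeVN (n : ℕ) (x : Fin n → ℕ) (y : Fin (n+1) → ℕ) : Fin (2*n+1) → ℕ :=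
  fun i => if h : (i : ℕ) < n then x ⟨i, h⟩
           else y ⟨(i : ℕ) - n, by have := i.isLt; omega⟩

/-!
On a single-minded profile in which `n_j` voters support alternative `j`, the median for `j` is
exactly the phantom with index `n - n_j`, so the outcome at integral time `τ` is the vector
`a_j(τ) = φ_{n - n_j, j}(τ)`, non-decreasing in `τ`. Single-minded proportionality gives a
fractional time at which these phantoms sit at the quotas `b n_j / n`, and the cap gives the
time `1` at which they sit at the upper quotas; by floor rounding the integral trajectories pass
through `⌊b n_j / n⌋` and `⌈b n_j / n⌉` at some times `τ₁`, `τ₂`. At a normalization time `τ`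
the `a_j(τ)` sum to `b = ∑ b n_j / n`. If `τ < τ₁`, every `a_j(τ)` is at most its lower quota
while their sum is at least the sum of lower quotas, forcing equality; symmetrically for `τ > τ₂`.
-/

open Finset

namespace List
variable {α : Type*} [LinearOrder α] {l : List α}

theorem Pairwise.getElem_le_of_lt_countP (hs : l.Pairwise (· ≤ ·)) {k : ℕ} (hk : k < l.length)
    {a : α} (h : k < l.countP (· ≤ a)) : l[k] ≤ a := by
  by_contra! hlt
  have hdrop : (l.drop k).countP (· ≤ a) = 0 := by
    refine countP_eq_zero.2 fun x hx => ?_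
    rw [drop_eq_getElem_cons hk, mem_cons] at hx
    have hrest := (pairwise_cons.1 (drop_eq_getElem_cons hk ▸ hs.sublist (drop_sublist k l))).1
    rcases hx with rfl | hx
    · simpa using hlt
    · simpa using hlt.trans_le (hrest x hx)
  have htake : (l.take k).countP (· ≤ a) ≤ k :=
    countP_le_length.trans (length_take_le k l)
  rw [← take_append_drop k l, countP_append] at h
  omega

theorem Pairwise.le_getElem_of_sub_le_countP (hs : l.Pairwise (· ≤ ·)) {k : ℕ} (hk : k < l.length)
    {a : α} (h : l.length - k ≤ l.countP (a ≤ ·)) : a ≤ l[k] := by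
  by_contra! hlt
  have htake : (l.take (k + 1)).countP (a ≤ ·) = 0 := by
    refine countP_eq_zero.2 fun x hx => ?_
    obtain ⟨i, hi, rfl⟩ := getElem_of_mem hx
    rw [length_take] at hi
    have hik : i ≤ k := by omega
    rw [getElem_take]
    have : l[i] ≤ l[k] := by
      rcases hik.lt_or_eq with hik | rfl
      · exact pairwise_iff_getElem.1 hs i k _ hk hik
      · rfl
    simpa using this.trans_lt hlt
  have hdrop : (l.drop (k + 1)).countP (a ≤ ·) ≤ l.length - (k + 1) :=
    countP_le_length.trans (length_drop ..).le
  have hsplit := countP_append (p := (a ≤ ·)) (l₁ := l.take (k + 1)) (l₂ := l.drop (k + 1))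
  rw [take_append_drop] at hsplit
  omega

end List

theorem Finset.sum_card_filter_eq_card_of_existsUnique {ι κ : Type*} [Fintype ι] [Fintype κ]
    (r : ι → κ → Prop) [∀ i j, Decidable (r i j)] (h : ∀ i, ∃! j, r i j) :
    ∑ j, #{i | r i j} = Fintype.card ι := by
  have hfiber : ∀ i, #{j | r i j} = 1 := fun i => by
    obtain ⟨j, hj, huniq⟩ := h i
    exact card_eq_one.2 ⟨j, eq_singleton_iff_unique_mem.2 ⟨by simpa using hj, by simpa using huniq⟩⟩
  have hcount := sum_card_bipartiteAbove_eq_sum_card_bipartiteBelow (s := univ) (t := univ) r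
  simp only [bipartiteAbove, bipartiteBelow, hfiber, sum_const, card_univ, smul_eq_mul,
    mul_one] at hcount
  exact hcount.symm

theorem le_of_sum_le_sum_of_monotone {ι α M : Type*} [Fintype ι] [LinearOrder α]
    [AddCommMonoid M] [PartialOrder M] [IsOrderedCancelAddMonoid M] {a : ι → α → M}
    (ha : ∀ j, Monotone (a j)) {s t : α} (h : ∑ j, a j s ≤ ∑ j, a j t) (j : ι) :
    a j s ≤ a j t := by
  rcases le_total s t with hst | hts
  · exact ha j hst
  · have hle : ∀ j ∈ univ, a j t ≤ a j s := fun j _ => ha j hts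
    exact ((sum_eq_sum_iff_of_le hle).1 (le_antisymm (sum_le_sum hle) h) j (mem_univ j)).ge

section FloorRing
variable {ι K : Type*} [Fintype ι] [Ring K] [LinearOrder K] [IsStrictOrderedRing K] [FloorRing K]

theorem sum_floor_le_of_sum_eq {x : ι → K} {c : ℤ} (h : ∑ j, x j = c) : ∑ j, ⌊x j⌋ ≤ c := by
  have : ((∑ j, ⌊x j⌋ : ℤ) : K) ≤ c := by
    push_cast
    exact h ▸ sum_le_sum fun j _ => Int.floor_le (x j)
  exact_mod_cast this

theorem le_sum_ceil_of_sum_eq {x : ι → K} {c : ℤ} (h : ∑ j, x j = c) : c ≤ ∑ j, ⌈x j⌉ := by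
  have : (c : K) ≤ ((∑ j, ⌈x j⌉ : ℤ) : K) := by
    push_cast
    exact h ▸ sum_le_sum fun j _ => Int.le_ceil (x j)
  exact_mod_cast this

theorem floor_le_and_le_ceil_of_monotone {α : Type*} [LinearOrder α] {a : ι → α → ℤ}
    (ha : ∀ j, Monotone (a j)) {q : ι → K} {τ₁ τ₂ τ : α} (h₁ : ∀ j, a j τ₁ = ⌊q j⌋)
    (h₂ : ∀ j, a j τ₂ = ⌈q j⌉) (hτ : ∑ j, q j = (∑ j, a j τ : ℤ)) (j : ι) :
    ⌊q j⌋ ≤ a j τ ∧ a j τ ≤ ⌈q j⌉ := by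
  rw [← h₁, ← h₂]
  constructor
  · refine le_of_sum_le_sum_of_monotone ha ?_ j
    simpa only [h₁] using sum_floor_le_of_sum_eq hτ
  · refine le_of_sum_le_sum_of_monotone ha ?_ j
    simpa only [h₂] using le_sum_ceil_of_sum_eq hτ

end FloorRing

theorem card_filter_mergeVN (n : ℕ) (x : Fin n → ℕ) (y : Fin (n+1) → ℕ)
    (p : ℕ → Prop) [DecidablePred p] :
    #{i | p (mergeVN n x y i)} = #{i | p (x i)} + #{k | p (y k)} := by
  simp only [card_filter]
  rw [← Fin.sum_congr' _ (by omega : n + (n + 1) = 2 * n + 1), Fin.sum_univ_add]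
  simp [mergeVN]

section medianN
variable {n : ℕ} (v : Fin (2*n+1) → ℕ)

theorem length_sort_map_univ :
    (Multiset.sort (Multiset.map v univ.val) (· ≤ ·)).length = 2 * n + 1 := by
  simp

theorem countP_sort_map_univ (p : ℕ → Prop) [DecidablePred p] :
    (Multiset.sort (Multiset.map v univ.val) (· ≤ ·)).countP (fun x => decide (p x))
      = #{i | p (v i)} := by
  rw [← Multiset.coe_countP, Multiset.sort_eq, Multiset.countP_map]
  rfl

theorem medianN_eq_getElem :
    medianN n v = (Multiset.sort (Multiset.map v univ.val) (· ≤ ·))[n]'(by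
      rw [length_sort_map_univ]; omega) := by
  rw [medianN, List.getD_eq_getElem]

variable {v}

theorem medianN_le_of_lt_card {a : ℕ} (h : n < #{i | v i ≤ a}) : medianN n v ≤ a := by
  rw [medianN_eq_getElem]
  refine (Multiset.pairwise_sort _ _).getElem_le_of_lt_countP _ ?_
  rwa [countP_sort_map_univ v (· ≤ a)]

theorem le_medianN_of_lt_card {a : ℕ} (h : n < #{i | a ≤ v i}) : a ≤ medianN n v := by
  rw [medianN_eq_getElem]
  refine (Multiset.pairwise_sort _ _).le_getElem_of_sub_le_countP _ ?_
  rw [countP_sort_map_univ v (a ≤ ·), length_sort_map_univ]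
  omega

end medianN

theorem medianN_mergeVN_of_forall_eq_or_eq_zero {n b : ℕ} {x : Fin n → ℕ} {y : Fin (n+1) → ℕ}
    (hx : ∀ i, x i = b ∨ x i = 0) (hyb : ∀ k, y k ≤ b) (hy : Antitone y)
    {k : Fin (n+1)} (hk : (k : ℕ) + #{i | x i = b} = n) :
    medianN n (mergeVN n x y) = y k := by
  have hsplit := card_filter_add_card_filter_not (s := univ) (fun i => x i = b)
  rw [card_univ, Fintype.card_fin] at hsplit
  apply le_antisymm
  · apply medianN_le_of_lt_card
    have hvoters : #{i | ¬x i = b} ≤ #{i | x i ≤ y k} :=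
      card_le_card fun i hi => by
        simp only [mem_filter, mem_univ, true_and] at hi ⊢
        rw [(hx i).resolve_left hi]
        exact Nat.zero_le _
    have hphantoms : #(Ici k) ≤ #{k' | y k' ≤ y k} :=
      card_le_card fun k' hk' => by simpa using hy (mem_Ici.1 hk')
    rw [Fin.card_Ici] at hphantoms
    rw [card_filter_mergeVN n x y (· ≤ y k)]
    omega
  · apply le_medianN_of_lt_card
    have hvoters : #{i | x i = b} ≤ #{i | y k ≤ x i} :=
      card_le_card fun i hi => by
        simp only [mem_filter, mem_univ, true_and] at hi ⊢
        exact hi ▸ hyb k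
    have hphantoms : #(Iic k) ≤ #{k' | y k ≤ y k'} :=
      card_le_card fun k' hk' => by simpa using hy (mem_Iic.1 hk')
    rw [Fin.card_Iic] at hphantoms
    rw [card_filter_mergeVN n x y (y k ≤ ·)]
    omega

section SingleMinded
variable {n m b : ℕ} {P : Fin n → Fin m → ℕ}

theorem eq_or_eq_zero_of_singleMinded (hsm : ∀ i, ∃ j, P i j = b ∧ ∀ j', j' ≠ j → P i j' = 0)
    (i : Fin n) (j : Fin m) : P i j = b ∨ P i j = 0 := by
  obtain ⟨j₀, hj₀, hother⟩ := hsm i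
  exact (eq_or_ne j j₀).imp (fun h : j = j₀ => h ▸ hj₀) (hother j)

theorem sum_card_filter_eq_of_singleMinded (hb : 0 < b)
    (hsm : ∀ i, ∃ j, P i j = b ∧ ∀ j', j' ≠ j → P i j' = 0) :
    ∑ j, #{i | P i j = b} = n := by
  refine (sum_card_filter_eq_card_of_existsUnique _ fun i => ?_).trans (Fintype.card_fin n)
  obtain ⟨j₀, hj₀, hother⟩ := hsm i
  refine ⟨j₀, hj₀, fun j hj => by_contra fun hne => hb.ne' ?_⟩
  exact hj.symm.trans (hother j hne)

end SingleMinded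

/-- The integral moving-phantom mechanism induced (via floor rounding) by a
single-minded proportional and upper-quota capped fractional phantom system is
single-minded quota-proportional: on a single-minded profile where `n_j` voters
vote `b` on alternative `j`, any output (vector of medians at a normalization
time) gives alternative `j` an amount in `{⌊b·n_j/n⌋, ⌈b·n_j/n⌉}`. -/
theorem stmt8 (n m b : ℕ) (hn : 0 < n) (hb : 0 < b)
    -- fractional phantom system
    (f : Fin (n+1) → ℝ → ℝ)
    -- upper-quota capped
    (hcap : ∀ k : Fin (n+1), f k 1 = ⌈((b : ℝ) * ((n : ℝ) - (k : ℕ))) / n⌉)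
    -- single-minded proportional: on single-minded profiles, at some
    -- normalization time the medians equal the average
    (hsmp : ∀ nj : Fin m → ℕ, ∑ j, nj j = n →
      ∃ t ∈ Set.Icc (0:ℝ) 1,
        ∀ j, f ⟨n - nj j, by omega⟩ t = ((b : ℝ) * (nj j : ℝ)) / n)
    -- the induced integral phantom system
    (φ : Fin (n+1) → Fin m → ℕ → ℕ)
    (hφmono : ∀ k j, Monotone (φ k j))
    (hφub : ∀ k j τ, φ k j τ ≤ b)
    (hφord : ∀ (k k' : Fin (n+1)) (j : Fin m) (τ : ℕ), k ≤ k' → φ k' j τ ≤ φ k j τ)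
    -- floor rounding: every floored phantom configuration is attained
    (hfloor : ∀ t ∈ Set.Icc (0:ℝ) 1, ∃ τ ≤ b*m*(n+1), ∀ k j, (φ k j τ : ℤ) = ⌊f k t⌋)
    -- single-minded profile
    (P : Fin n → Fin m → ℕ)
    (hsm : ∀ i, ∃ j, P i j = b ∧ ∀ j', j' ≠ j → P i j' = 0)
    (nj : Fin m → ℕ)
    (hnjdef : ∀ j, nj j = (Finset.univ.filter (fun i => P i j = b)).card)
    -- any normalization time
    (τs : ℕ)
    (hnorm : ∑ j, medianN n (mergeVN n (fun i => P i j) (fun k => φ k j τs)) = b) :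
    ∀ j, (⌊((b : ℝ) * (nj j : ℝ)) / n⌋ ≤
            (medianN n (mergeVN n (fun i => P i j) (fun k => φ k j τs)) : ℤ)) ∧
         ((medianN n (mergeVN n (fun i => P i j) (fun k => φ k j τs)) : ℤ) ≤
            ⌈((b : ℝ) * (nj j : ℝ)) / n⌉) := by
  have hsum : ∑ j, nj j = n := by
    simpa only [hnjdef] using sum_card_filter_eq_of_singleMinded hb hsm
  have hnj_le : ∀ j, nj j ≤ n := fun j =>
    hsum ▸ single_le_sum (fun _ _ => Nat.zero_le _) (mem_univ j)
  set K : Fin m → Fin (n+1) := fun j => ⟨n - nj j, by omega⟩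
  have hmed : ∀ j τ, medianN n (mergeVN n (fun i => P i j) (fun k => φ k j τ)) = φ (K j) j τ :=
    fun j τ => medianN_mergeVN_of_forall_eq_or_eq_zero
      (fun i => eq_or_eq_zero_of_singleMinded hsm i j) (fun k => hφub k j τ)
      (fun k k' => hφord k k' j τ) (by rw [← hnjdef]; have := hnj_le j; simp only [K]; omega)
  obtain ⟨t, ht, hft⟩ := hsmp nj hsum
  obtain ⟨τ₁, -, hτ₁⟩ := hfloor t ht
  obtain ⟨τ₂, -, hτ₂⟩ := hfloor 1 ⟨zero_le_one, le_rfl⟩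
  have hlow : ∀ j, (φ (K j) j τ₁ : ℤ) = ⌊(b : ℝ) * nj j / n⌋ := fun j => by rw [hτ₁, hft]
  have hhigh : ∀ j, (φ (K j) j τ₂ : ℤ) = ⌈(b : ℝ) * nj j / n⌉ := fun j => by
    rw [hτ₂, hcap, Int.floor_intCast]
    simp only [K, Nat.cast_sub (hnj_le j), sub_sub_cancel]
  have hquota : ∑ j, (b : ℝ) * nj j / n = (∑ j, (φ (K j) j τs : ℤ) : ℤ) := by
    rw [← sum_div, ← mul_sum, ← Nat.cast_sum, hsum, mul_div_cancel_right₀ _ (by positivity)]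
    exact_mod_cast (by simpa only [hmed] using hnorm.symm)
  intro j
  rw [hmed]
  exact floor_le_and_le_ceil_of_monotone (a := fun j τ => (φ (K j) j τ : ℤ))
    (fun j => Nat.mono_cast.comp (hφmono (K j) j)) hlow hhigh hquota j
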